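/- arXiv:2111.02665 — 7 statements merged into one kernel-verified Lean document; each statement's English description precedes it below -/
import Mathlib

section
/- Let X be a set and φ, λ : X → [0,∞]. Then φ ⋔ λ = sup over r ∈ [0,∞) of (min{r_X, φ} ⋔ λ); that is, inf_{x∈X}(φ(x) + λ(x)) = sup_{r<∞} inf_{x∈X}(min{r, φ(x)} + λ(x)). -/
open scoped ENNReal
open Set Classical

noncomputable section

/-- `ρ_X(l, m) = sup_x (m x ⊖ l x)` on `[0,∞] = ℝ≥0∞` (with truncated subtraction). -/
def rho {X : Type*} (l m : X → ℝ≥0∞) : ℝ≥0∞ := ⨆ x, m x - l x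

/-- `l ⋔ m = inf_x (l x + m x)` (inf over the empty set is `∞`). -/
def pitchfork {X : Type*} (l m : X → ℝ≥0∞) : ℝ≥0∞ := ⨅ x, l x + m x

theorem pitchfork_eq_sup_min_const {X : Type*} (f l : X → ℝ≥0∞) :
    pitchfork f l = ⨆ (r : ℝ≥0∞) (_ : r < ⊤), pitchfork (fun x => min r (f x)) l := by
  apply le_antisymm
  · apply ENNReal.le_of_forall_nnreal_lt
    intro r hr
    refine le_trans ?_ (le_iSup₂ (f := fun (s : ℝ≥0∞) (_ : s < ⊤) =>
      pitchfork (fun x => min s (f x)) l) (r : ℝ≥0∞) ENNReal.coe_lt_top)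
    refine le_iInf fun x => ?_
    show (r:ℝ≥0∞) ≤ min (r:ℝ≥0∞) (f x) + l x
    rcases le_total (r : ℝ≥0∞) (f x) with h | h
    · rw [min_eq_left h]; exact le_self_add
    · rw [min_eq_right h]
      exact le_trans hr.le (iInf_le (fun x => f x + l x) x)
  · refine iSup₂_le fun r _ => iInf_mono fun x => ?_
    exact add_le_add (min_le_right r (f x)) le_rfl
end
end

section
/- Let X be a set, φ, λ : X → [0,∞] and b ∈ [0,∞). (i) If λ(x) ≤ b for all x ∈ X, then ρ_X(φ, b_X ⊖ λ) = b ⊖ (λ ⋔ φ), where b_X ⊖ λ is the pointwise truncated difference x ↦ b ⊖ λ(x). (ii) If φ ⋔ λ ≤ b, then φ ⋔ λ = b ⊖ ρ_X(φ, b_X ⊖ λ). -/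
open scoped ENNReal
open Set Classical

noncomputable section

theorem pitchfork_comm {X : Type*} (l m : X → ℝ≥0∞) : pitchfork l m = pitchfork m l := by
  simp only [pitchfork, add_comm]

theorem rho_const_tsub {X : Type*} (f l : X → ℝ≥0∞) (b : ℝ≥0∞) :
    rho f (fun x => b - l x) = b - pitchfork l f := by
  rw [rho, pitchfork, ENNReal.sub_iInf]
  exact iSup_congr fun x => tsub_tsub b (l x) (f x)

theorem rho_pitchfork_duality {X : Type*} (f l : X → ℝ≥0∞) (b : ℝ≥0∞) (hb : b ≠ ⊤) :
    ((∀ x, l x ≤ b) → rho f (fun x => b - l x) = b - pitchfork l f) ∧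
    (pitchfork f l ≤ b → pitchfork f l = b - rho f (fun x => b - l x)) := by
  refine ⟨fun _ => rho_const_tsub f l b, fun h => ?_⟩
  rw [rho_const_tsub, pitchfork_comm l f, ENNReal.sub_sub_cancel hb h]
end
end

section
/- Let (X,d) be a complete generalized metric space (every coweight has a limit). Then a function λ : X → [0,∞] is a [0,∞]-filter of (X,d) if and only if: (i) for all x ∈ X, r ∈ [0,∞] and every cotensor r↣x of r with x, λ(r↣x) = λ(x) ⊖ r; and (ii) for all x, y ∈ X and every meet x ∧ y of x and y in the underlying order, λ(x ∧ y) = max{λ(x), λ(y)}. (In a complete generalized metric space all cotensors and all binary meets in the underlying order exist.) -/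
open scoped ENNReal
open Set Classical

noncomputable section

/-- A generalized metric: `d x x = 0` and the triangle inequality. -/
def IsGMet {X : Type*} (d : X → X → ℝ≥0∞) : Prop :=
  (∀ x : X, d x x = 0) ∧ ∀ x y z : X, d x z ≤ d x y + d y z

/-- A coweight of `(X,d)`. -/
def IsCoweight {X : Type*} (d : X → X → ℝ≥0∞) (l : X → ℝ≥0∞) : Prop :=
  ∀ x y : X, l y ≤ l x + d x y

/-- `a` is a limit of the coweight `f`. -/
def IsLimitOf {X : Type*} (d : X → X → ℝ≥0∞) (f : X → ℝ≥0∞) (a : X) : Prop :=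
  ∀ y : X, d y a = ⨆ x, d y x - f x

/-- Complete: every coweight has a limit. -/
def CompleteGMet {X : Type*} (d : X → X → ℝ≥0∞) : Prop :=
  ∀ f : X → ℝ≥0∞, IsCoweight d f → ∃ a : X, IsLimitOf d f a

/-- `t` is a cotensor of `r` with `x`: `d(y, r↣x) = d(y,x) ⊖ r` for all `y`. -/
def IsCotensor {X : Type*} (d : X → X → ℝ≥0∞) (r : ℝ≥0∞) (x t : X) : Prop :=
  ∀ y : X, d y t = d y x - r

/-- `z` is a meet of `x` and `y` in the underlying order `x ⊑ y ↔ d x y = 0`. -/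
def IsMeetIn {X : Type*} (d : X → X → ℝ≥0∞) (x y z : X) : Prop :=
  d z x = 0 ∧ d z y = 0 ∧ ∀ w : X, d w x = 0 → d w y = 0 → d w z = 0

/-- A `[0,∞]`-filter: a function presented as `inf_i sup_{j ≥ i} d(x_j, −)` for some
backward Cauchy net. -/
def Is01Filter {X : Type u} (d : X → X → ℝ≥0∞) (f : X → ℝ≥0∞) : Prop :=
  ∃ (I : Type u) (le : I → I → Prop) (xs : I → X),
    Nonempty I ∧ (∀ i, le i i) ∧ (∀ i j k, le i j → le j k → le i k) ∧
    (∀ i j, ∃ k, le i k ∧ le j k) ∧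
    (⨅ i, ⨆ (j) (_ : le i j) (k) (_ : le j k), d (xs k) (xs j)) = 0 ∧
    (∀ y : X, f y = ⨅ i, ⨆ (j) (_ : le i j), d (xs j) y)

universe u

namespace FCMaux

lemma add_sub_add_le (a b c : ℝ≥0∞) : (a + c) - (b + c) ≤ a - b := by
  rw [tsub_le_iff_right]
  calc a + c ≤ (a - b + b) + c := add_le_add_left le_tsub_add c
  _ = a - b + (b + c) := by rw [add_assoc]

lemma iInf_sub' {ι : Sort*} [Nonempty ι] (f : ι → ℝ≥0∞) (r : ℝ≥0∞) :
    (⨅ i, (f i - r)) = (⨅ i, f i) - r := by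
  refine le_antisymm ?_ (le_iInf fun i => tsub_le_tsub_right (iInf_le f i) r)
  by_cases h : ∃ i, f i ≤ r
  · obtain ⟨i, hi⟩ := h
    refine le_trans (iInf_le_of_le i (le_of_eq (tsub_eq_zero_of_le hi))) zero_le
  · push_neg at h
    have hr : r ≠ ∞ := ((h (Classical.arbitrary ι)).trans_le le_top).ne
    refine ENNReal.le_sub_of_add_le_right hr (le_iInf fun i => ?_)
    calc (⨅ j, (f j - r)) + r ≤ (f i - r) + r := add_le_add_left (iInf_le _ i) r
    _ = f i := tsub_add_cancel_of_le (h i).le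

variable {X : Type u} (d : X → X → ℝ≥0∞)

lemma nonemptyX (hc : CompleteGMet d) : Nonempty X := by
  obtain ⟨a, -⟩ := hc (fun _ => 0) (fun x y => zero_le)
  exact ⟨a⟩

lemma keyExists (hd : IsGMet d) (hc : CompleteGMet d) (g : X → ℝ≥0∞) :
    ∃ z : X, ∀ v, d v z = ⨆ x, (d v x - g x) := by
  have hX : Nonempty X := nonemptyX d hc
  have hcw : IsCoweight d (fun w => ⨅ x, (g x + d x w)) := by
    intro w w'
    rw [ENNReal.iInf_add]
    refine le_iInf fun x => iInf_le_of_le x ?_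
    calc g x + d x w' ≤ g x + (d x w + d w w') := add_le_add_right (hd.2 x w w') _
    _ = g x + d x w + d w w' := (add_assoc _ _ _).symm
  obtain ⟨a, ha⟩ := hc _ hcw
  refine ⟨a, fun v => (ha v).trans (le_antisymm (iSup_le fun w => ?_) (iSup_le fun x => ?_))⟩
  · rw [ENNReal.sub_iInf]
    refine iSup_le fun x => le_iSup_of_le x ?_
    exact le_trans (tsub_le_tsub_right (hd.2 v x w) _) (add_sub_add_le _ _ _)
  · refine le_iSup_of_le x (tsub_le_tsub_left ?_ (d v x))
    refine iInf_le_of_le x ?_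
    rw [hd.1 x, add_zero]

lemma finExists (hd : IsGMet d) (hc : CompleteGMet d) (F : Finset X) (c : X → ℝ≥0∞) :
    ∃ z : X, ∀ v, d v z = ⨆ x ∈ F, (d v x - c x) := by
  obtain ⟨z, hz⟩ := keyExists d hd hc (fun w => if w ∈ F then c w else ∞)
  refine ⟨z, fun v => (hz v).trans (le_antisymm (iSup_le fun w => ?_)
    (iSup₂_le fun x hx => le_iSup_of_le x (by simp [hx])))⟩
  by_cases h : w ∈ F
  · simp only [h, if_true]
    exact le_iSup₂_of_le w h le_rfl
  · simp [h]

lemma cotensorExists (hd : IsGMet d) (hc : CompleteGMet d) (r : ℝ≥0∞) (x : X) :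
    ∃ t : X, IsCotensor d r x t := by
  obtain ⟨t, ht⟩ := finExists d hd hc {x} (fun _ => r)
  exact ⟨t, fun v => (ht v).trans (by simp)⟩

lemma pairExists (hd : IsGMet d) (hc : CompleteGMet d) (x y : X) :
    ∃ z : X, ∀ v, d v z = d v x ⊔ d v y := by
  obtain ⟨z, hz⟩ := finExists d hd hc {x, y} (fun _ => 0)
  refine ⟨z, fun v => (hz v).trans (le_antisymm (iSup₂_le fun w hw => ?_) (sup_le ?_ ?_))⟩
  · rw [tsub_zero]
    rcases Finset.mem_insert.mp hw with rfl | hw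
    · exact le_sup_left
    · rw [Finset.mem_singleton.mp hw]; exact le_sup_right
  · exact le_iSup₂_of_le x (Finset.mem_insert_self x {y}) (by simp)
  · exact le_iSup₂_of_le y (by simp) (by simp)

variable {l : X → ℝ≥0∞}

lemma meetZero (hd : IsGMet d) (hc : CompleteGMet d)
    (hcot : ∀ (x t : X) (r : ℝ≥0∞), IsCotensor d r x t → l t = l x - r)
    (hmeet : ∀ x y z : X, IsMeetIn d x y z → l z = max (l x) (l y))
    (ε : ℝ≥0∞) (F : Finset X) :
    ∀ z : X, (∀ v, d v z = ⨆ x ∈ F, (d v x - (l x + ε))) → l z = 0 := by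
  classical
  induction F using Finset.induction_on with
  | empty =>
    intro z hz
    have h0 : ∀ v, d v z = 0 := fun v => by simpa using hz v
    have hct : IsCotensor d ⊤ z z := fun y => by rw [ENNReal.sub_top]; exact h0 y
    rw [hcot z z ⊤ hct, ENNReal.sub_top]
  | @insert a F' ha ih =>
    intro z hz
    obtain ⟨t, ht⟩ := cotensorExists d hd hc (l a + ε) a
    obtain ⟨z', hz'⟩ := finExists d hd hc F' (fun x => l x + ε)
    have h0 : (⨆ x ∈ insert a F', (d z x - (l x + ε))) = 0 := (hz z).symm.trans (hd.1 z)
    have hm : IsMeetIn d t z' z := by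
      refine ⟨?_, ?_, ?_⟩
      · rw [ht z]
        exact le_antisymm (le_trans (le_iSup₂_of_le a (Finset.mem_insert_self a F') le_rfl)
          h0.le) zero_le
      · rw [hz' z]
        refine le_antisymm (iSup₂_le fun x hx => le_trans
          (le_iSup₂_of_le x (Finset.mem_insert_of_mem hx) le_rfl) h0.le) zero_le
      · intro w h1 h2
        rw [hz w]
        refine le_antisymm (iSup₂_le fun x hx => ?_) zero_le
        rcases Finset.mem_insert.mp hx with rfl | hx
        · rw [← ht w, h1]
        · calc d w x - (l x + ε) ≤ ⨆ x ∈ F', (d w x - (l x + ε)) := le_iSup₂_of_le x hx le_rfl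
          _ = 0 := by rw [← hz' w, h2]
    rw [hmeet t z' z hm, hcot a t (l a + ε) ht, ih z' hz',
      tsub_eq_zero_of_le (self_le_add_right (l a) ε)]
    simp

lemma coweight_of_cond (hd : IsGMet d) (hc : CompleteGMet d)
    (hcot : ∀ (x t : X) (r : ℝ≥0∞), IsCotensor d r x t → l t = l x - r)
    (hmeet : ∀ x y z : X, IsMeetIn d x y z → l z = max (l x) (l y)) :
    IsCoweight d l := by
  intro x y
  obtain ⟨t, ht⟩ := cotensorExists d hd hc (d x y) y
  have hxt : d x t = 0 := by rw [ht x, tsub_self]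
  have hmx : IsMeetIn d x t x := ⟨hd.1 x, hxt, fun w h1 _ => h1⟩
  have hlt : l t ≤ l x := (le_max_right (l x) (l t)).trans (hmeet x t x hmx).ge
  rw [hcot y t (d x y) ht] at hlt
  exact tsub_le_iff_right.mp hlt

end FCMaux
theorem filter_iff_cotensor_meet' {X : Type u} (d : X → X → ℝ≥0∞) (hd : IsGMet d)
    (hc : CompleteGMet d) (l : X → ℝ≥0∞) :
    (∃ (I : Type u) (le : I → I → Prop) (xs : I → X),
      Nonempty I ∧ (∀ i, le i i) ∧ (∀ i j k, le i j → le j k → le i k) ∧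
      (∀ i j, ∃ k, le i k ∧ le j k) ∧
      (⨅ i, ⨆ (j) (_ : le i j) (k) (_ : le j k), d (xs k) (xs j)) = 0 ∧
      (∀ y : X, l y = ⨅ i, ⨆ (j) (_ : le i j), d (xs j) y)) ↔
      ((∀ (x t : X) (r : ℝ≥0∞), IsCotensor d r x t → l t = l x - r) ∧
       (∀ x y z : X, IsMeetIn d x y z → l z = max (l x) (l y))) := by
  classical
  constructor
  · rintro ⟨I, le, xs, hne, hrefl, htrans, hdir, -, hrep⟩
    haveI := hne
    have hmono : ∀ (p : X) {i i' : I}, le i i' →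
        (⨆ j, ⨆ _ : le i' j, d (xs j) p) ≤ ⨆ j, ⨆ _ : le i j, d (xs j) p := by
      intro p i i' h
      exact iSup₂_le fun j hj => le_iSup₂_of_le j (htrans i i' j h hj) le_rfl
    have hcw : ∀ a b : X, l b ≤ l a + d a b := by
      intro a b
      rw [hrep a, hrep b, ENNReal.iInf_add]
      refine le_iInf fun i => iInf_le_of_le i ?_
      exact iSup₂_le fun j hj =>
        (hd.2 (xs j) a b).trans (add_le_add_left (le_iSup₂ (f := fun j _ => d (xs j) a) j hj) _)
    constructor
    · intro x t r hct
      rw [hrep t, hrep x, ← FCMaux.iInf_sub']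
      refine iInf_congr fun i => ?_
      rw [ENNReal.iSup_sub]
      refine iSup_congr fun j => ?_
      rw [ENNReal.iSup_sub]
      exact iSup_congr fun hj => hct (xs j)
    · intro x y z hm
      obtain ⟨z0, hz0⟩ := FCMaux.pairExists d hd hc x y
      have h2 : d z0 x = 0 :=
        le_antisymm (le_trans le_sup_left ((hz0 z0).symm.trans (hd.1 z0)).le) zero_le
      have h3 : d z0 y = 0 :=
        le_antisymm (le_trans le_sup_right ((hz0 z0).symm.trans (hd.1 z0)).le) zero_le
      have h4 : d z0 z = 0 := hm.2.2 z0 h2 h3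
      have h1 : d z z0 = 0 := by rw [hz0 z, hm.1, hm.2.1]; simp
      have hzz : l z = l z0 :=
        le_antisymm (by simpa [h4] using hcw z0 z) (by simpa [h1] using hcw z z0)
      have hlx : l x ≤ l z0 := by
        rw [hrep x, hrep z0]
        refine iInf_mono fun i => iSup₂_le fun j hj => le_iSup₂_of_le j hj ?_
        calc d (xs j) x ≤ d (xs j) z0 + d z0 x := hd.2 _ _ _
        _ = d (xs j) z0 := by rw [h2, add_zero]
      have hly : l y ≤ l z0 := by
        rw [hrep y, hrep z0]
        refine iInf_mono fun i => iSup₂_le fun j hj => le_iSup₂_of_le j hj ?_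
        calc d (xs j) y ≤ d (xs j) z0 + d z0 y := hd.2 _ _ _
        _ = d (xs j) z0 := by rw [h3, add_zero]
      have hle : l z0 ≤ max (l x) (l y) := by
        rw [hrep x, hrep y, hrep z0]
        have hsup : ∀ i : I, (⨆ j, ⨆ _ : le i j, d (xs j) z0) =
            (⨆ j, ⨆ _ : le i j, d (xs j) x) ⊔ (⨆ j, ⨆ _ : le i j, d (xs j) y) := by
          intro i
          rw [← iSup_sup_eq]
          refine iSup_congr fun j => ?_
          rw [← iSup_sup_eq]
          exact iSup_congr fun hj => hz0 (xs j)
        by_contra hlt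
        push_neg at hlt
        have hx' : (⨅ i, ⨆ j, ⨆ _ : le i j, d (xs j) x) < ⨅ i, ⨆ j, ⨆ _ : le i j, d (xs j) z0 :=
          lt_of_le_of_lt (le_max_left _ _) hlt
        have hy' : (⨅ i, ⨆ j, ⨆ _ : le i j, d (xs j) y) < ⨅ i, ⨆ j, ⨆ _ : le i j, d (xs j) z0 :=
          lt_of_le_of_lt (le_max_right _ _) hlt
        obtain ⟨i1, hi1⟩ := iInf_lt_iff.mp hx'
        obtain ⟨i2, hi2⟩ := iInf_lt_iff.mp hy'
        obtain ⟨k, hk1, hk2⟩ := hdir i1 i2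
        have hklt : (⨆ j, ⨆ _ : le k j, d (xs j) z0) <
            ⨅ i, ⨆ j, ⨆ _ : le i j, d (xs j) z0 := by
          rw [hsup k]
          exact sup_lt_iff.mpr ⟨lt_of_le_of_lt (hmono x hk1) hi1, lt_of_le_of_lt (hmono y hk2) hi2⟩
        exact absurd (iInf_le _ k) (not_le.mpr hklt)
      rw [hzz]
      exact le_antisymm hle (max_le hlx hly)
  · rintro ⟨hcot, hmeet⟩
    have hX : Nonempty X := FCMaux.nonemptyX d hc
    have hcw := FCMaux.coweight_of_cond d hd hc hcot hmeet
    set ε : ℕ → ℝ≥0∞ := fun n => ((n : ℝ≥0∞) + 1)⁻¹ with hε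
    have hεanti : ∀ {m n : ℕ}, m ≤ n → ε n ≤ ε m := by
      intro m n h
      exact ENNReal.inv_le_inv.mpr (add_le_add_left (by exact_mod_cast h) 1)
    have hε0 : (⨅ n, ε n) = 0 := by
      refine le_antisymm ?_ zero_le
      by_contra h
      push_neg at h
      obtain ⟨n, hn⟩ := ENNReal.exists_inv_nat_lt h.ne'
      have : (⨅ n, ε n) ≤ ((n : ℝ≥0∞))⁻¹ :=
        (iInf_le ε n).trans (ENNReal.inv_le_inv.mpr (self_le_add_right _ 1))
      exact absurd hn (not_lt.mpr this)
    have hexz : ∀ i : Finset X × ℕ, ∃ z : X, ∀ v, d v z = ⨆ x ∈ i.1, (d v x - (l x + ε i.2)) :=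
      fun i => FCMaux.finExists d hd hc i.1 (fun x => l x + ε i.2)
    choose z hz using hexz
    have hlz : ∀ i, l (z i) = 0 :=
      fun i => FCMaux.meetZero d hd hc hcot hmeet (ε i.2) i.1 (z i) (hz i)
    have hup : ∀ (i) (x), x ∈ i.1 → d (z i) x ≤ l x + ε i.2 := by
      intro i x hx
      have h0 : (⨆ x ∈ i.1, (d (z i) x - (l x + ε i.2))) = 0 :=
        (hz i (z i)).symm.trans (hd.1 (z i))
      have h1 := le_trans (le_iSup₂_of_le x hx le_rfl) h0.le
      exact tsub_eq_zero_iff_le.mp (le_antisymm h1 zero_le)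
    refine ⟨Finset X × ℕ, fun i j => i.1 ⊆ j.1 ∧ i.2 ≤ j.2, z, ⟨(∅, 0)⟩,
      fun i => ⟨subset_rfl, le_rfl⟩,
      fun i j k hij hjk => ⟨hij.1.trans hjk.1, hij.2.trans hjk.2⟩,
      fun i j => ⟨(i.1 ∪ j.1, max i.2 j.2), ⟨Finset.subset_union_left, le_max_left _ _⟩,
        ⟨Finset.subset_union_right, le_max_right _ _⟩⟩, ?_, ?_⟩
    · have hfwd : ∀ j k : Finset X × ℕ, (j.1 ⊆ k.1 ∧ j.2 ≤ k.2) → d (z k) (z j) = 0 := by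
        intro j k hjk
        rw [hz j (z k)]
        refine le_antisymm (iSup₂_le fun x hx => ?_) zero_le
        refine (tsub_eq_zero_of_le ?_).le
        exact (hup k x (hjk.1 hx)).trans (add_le_add_right (hεanti hjk.2) _)
      refine le_antisymm (le_trans (iInf_le _ ((∅ : Finset X), 0)) ?_) zero_le
      exact iSup₂_le fun j hj => iSup₂_le fun k hk => (hfwd j k hk).le
    · intro y
      refine le_antisymm (le_iInf fun i => ?_) ?_
      · calc l y ≤ l (z i) + d (z i) y := hcw (z i) y
        _ = d (z i) y := by rw [hlz i, zero_add]
        _ ≤ ⨆ j, ⨆ _ : (i.1 ⊆ j.1 ∧ i.2 ≤ j.2), d (z j) y :=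
          le_iSup₂_of_le i ⟨subset_rfl, le_rfl⟩ le_rfl
      · have key : ∀ n : ℕ,
            (⨅ i : Finset X × ℕ, ⨆ j, ⨆ _ : (i.1 ⊆ j.1 ∧ i.2 ≤ j.2), d (z j) y) ≤ l y + ε n := by
          intro n
          refine iInf_le_of_le ({y}, n) (iSup₂_le fun j hj => ?_)
          have hyj : y ∈ j.1 := hj.1 (Finset.mem_singleton_self y)
          exact (hup j y hyj).trans (add_le_add_right (hεanti hj.2) _)
        calc (⨅ i : Finset X × ℕ, ⨆ j, ⨆ _ : (i.1 ⊆ j.1 ∧ i.2 ≤ j.2), d (z j) y)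
            ≤ ⨅ n, (l y + ε n) := le_iInf key
        _ = l y + ⨅ n, ε n := ENNReal.add_iInf.symm
        _ = l y := by rw [hε0, add_zero]


theorem filter_iff_cotensor_meet {X : Type u} (d : X → X → ℝ≥0∞) (hd : IsGMet d)
    (hc : CompleteGMet d) (l : X → ℝ≥0∞) :
    Is01Filter d l ↔
      ((∀ (x t : X) (r : ℝ≥0∞), IsCotensor d r x t → l t = l x - r) ∧
       (∀ x y z : X, IsMeetIn d x y z → l z = max (l x) (l y))) := by
  exact filter_iff_cotensor_meet' d hd hc l
end
end

section
/- Let (X,δ) be an approach space and θ : X → [0,∞]. Then: (i) the saturation ↑θ = sup{λ ∈ 𝔘X : λ ≤ θ pointwise} is saturated; and (ii) θ is saturated if and only if θ = ↑θ. -/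
open scoped ENNReal
open Set Classical

noncomputable section

/-- An approach space: a set with a distance from points to subsets. -/
structure ApproachSpace (X : Type*) where
  dist : X → Set X → ℝ≥0∞
  dist_self : ∀ x : X, dist x {x} = 0
  dist_empty : ∀ x : X, dist x (∅ : Set X) = ⊤
  dist_union : ∀ (x : X) (A B : Set X), dist x (A ∪ B) = min (dist x A) (dist x B)
  dist_triangle : ∀ (x : X) (A B : Set X), dist x A ≤ (⨆ b ∈ B, dist b A) + dist x B

/-- The approach space `ℙ` on `[0,∞]`: `δ_ℙ(x, A) = x ⊖ sup A` for `A ≠ ∅`, and `∞` for `A = ∅`. -/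
def deltaP : ℝ≥0∞ → Set ℝ≥0∞ → ℝ≥0∞ := fun x A => if A = ∅ then ⊤ else x - sSup A

/-- A lower regular function of an approach space is a contraction into `ℙ`. -/
def IsLowerRegular {X : Type*} (D : ApproachSpace X) (f : X → ℝ≥0∞) : Prop :=
  ∀ (x : X) (A : Set X), deltaP (f x) (f '' A) ≤ D.dist x A

/-- An upper regular function: either the constant `∞`, or bounded with `r ⊖ λ`
lower regular for every `r`. -/
def IsUpperRegular {X : Type*} (D : ApproachSpace X) (l : X → ℝ≥0∞) : Prop :=
  (l = fun _ => ⊤) ∨ ((⨆ x, l x) < ⊤ ∧ ∀ r : ℝ≥0∞, IsLowerRegular D (fun x => r - l x))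

/-- A compact function: `ρ_X(θ, −)` turns pointwise infima of nonempty down-directed
families of upper regular functions into infima. -/
def IsCompactFun {X : Type*} (D : ApproachSpace X) (t : X → ℝ≥0∞) : Prop :=
  ∀ (I : Type*) (lam : I → X → ℝ≥0∞), Nonempty I →
    (∀ i, IsUpperRegular D (lam i)) →
    (∀ i j, ∃ k, (∀ x, lam k x ≤ lam i x) ∧ (∀ x, lam k x ≤ lam j x)) →
    rho t (fun x => ⨅ i, lam i x) = ⨅ i, rho t (lam i)

/-- `θ` is saturated if it is a coweight of the specialization metric `d_δ(x,y) = δ(x,{y})`. -/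
def IsSaturated {X : Type*} (D : ApproachSpace X) (t : X → ℝ≥0∞) : Prop :=
  ∀ x y : X, t y ≤ D.dist x {y} + t x

/-- The saturation `↑θ`: the pointwise supremum of all upper regular functions below `θ`. -/
def saturation {X : Type*} (D : ApproachSpace X) (t : X → ℝ≥0∞) : X → ℝ≥0∞ :=
  fun x => ⨆ (l : X → ℝ≥0∞) (_ : IsUpperRegular D l ∧ ∀ y, l y ≤ t y), l x

/-- Every upper regular function is saturated. -/
lemma upperRegular_saturated {X : Type*} (D : ApproachSpace X) (l : X → ℝ≥0∞)
    (h : IsUpperRegular D l) : IsSaturated D l := by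
  intro x y
  rcases h with h | ⟨hb, hr⟩
  · simp [h]
  · set r : ℝ≥0∞ := ⨆ z, l z with hrdef
    have hrne : r ≠ ⊤ := hb.ne
    have hx : l x ≤ r := le_iSup _ x
    have hy : l y ≤ r := le_iSup _ y
    have h1 := hr r x {y}
    have himg : (fun z => r - l z) '' ({y} : Set X) = {r - l y} := by simp
    -- h1 : deltaP (r - l x) ((fun z => r - l z) '' {y}) ≤ D.dist x {y}
    have h2 : (r - l x) - (r - l y) ≤ D.dist x {y} := by
      have := h1
      rw [himg, deltaP] at this
      simpa using this
    have h3 : r - l x ≤ (r - l y) + D.dist x {y} := tsub_le_iff_left.mp h2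
    have h4 : r ≤ (r - l y) + D.dist x {y} + l x := by
      calc r = (r - l x) + l x := (tsub_add_cancel_of_le hx).symm
        _ ≤ (r - l y) + D.dist x {y} + l x := add_le_add_left h3 _
    have h5 : r - (r - l y) ≤ D.dist x {y} + l x := by
      rw [tsub_le_iff_left]
      calc r ≤ (r - l y) + D.dist x {y} + l x := h4
        _ = (r - l y) + (D.dist x {y} + l x) := by ring
    rwa [ENNReal.sub_sub_cancel hrne hy] at h5

/-- The "cone" function `z ↦ c ⊖ d(z, y₀)` is upper regular for finite `c`. -/
lemma cone_upperRegular {X : Type*} (D : ApproachSpace X) (y₀ : X) (c : ℝ≥0∞)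
    (hc : c ≠ ⊤) : IsUpperRegular D (fun z => c - D.dist z {y₀}) := by
  right
  constructor
  · exact lt_of_le_of_lt (iSup_le fun z => tsub_le_self.trans le_rfl) hc.lt_top
  · intro r x A
    rcases eq_or_ne A (∅ : Set X) with hA | hA
    · simp [hA, deltaP, D.dist_empty]
    · have hAne : A.Nonempty := Set.nonempty_iff_ne_empty.mpr hA
      haveI : Nonempty A := hAne.to_subtype
      have himg : (fun z => r - (c - D.dist z {y₀})) '' A ≠ ∅ := by
        simp [Set.image_eq_empty, hA]
      rw [deltaP, if_neg himg]
      set s : ℝ≥0∞ := ⨆ a : A, D.dist a {y₀} with hs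
      have hsup : sSup ((fun z => r - (c - D.dist z {y₀})) '' A) = r - (c - s) := by
        rw [sSup_image]
        have : (⨆ a ∈ A, r - (c - D.dist a {y₀})) = ⨆ a : A, r - (c - D.dist a {y₀}) := by
          rw [iSup_subtype']
        rw [this, ← ENNReal.sub_iInf, ← ENNReal.sub_iSup hc]
      rw [hsup]
      have htri : D.dist x {y₀} ≤ s + D.dist x A := by
        have := D.dist_triangle x {y₀} A
        have heq : (⨆ b ∈ A, D.dist b {y₀}) = s := by rw [iSup_subtype']
        rwa [heq] at this
      have hmono : (c - s) - D.dist x A ≤ c - D.dist x {y₀} := by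
        rw [tsub_tsub]
        exact tsub_le_tsub_left htri c
      calc r - (c - D.dist x {y₀}) - (r - (c - s))
          ≤ r - ((c - s) - D.dist x A) - (r - (c - s)) := by
            exact tsub_le_tsub_right (tsub_le_tsub_left hmono r) _
        _ ≤ D.dist x A := by
            rw [tsub_le_iff_left, tsub_le_iff_left]
            calc r ≤ (r - (c - s)) + (c - s) := le_tsub_add
              _ ≤ (r - (c - s)) + (D.dist x A + ((c - s) - D.dist x A)) :=
                  add_le_add_right le_add_tsub _
              _ = (c - s - D.dist x A) + ((r - (c - s)) + D.dist x A) := by ring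

lemma iSup_min_nat (a : ℝ≥0∞) : (⨆ n : ℕ, min a (n : ℝ≥0∞)) = a := by
  apply le_antisymm
  · exact iSup_le fun n => min_le_left _ _
  · rcases eq_or_ne a ⊤ with ha | ha
    · rw [ha]
      have : (⨆ n : ℕ, min (⊤ : ℝ≥0∞) (n : ℝ≥0∞)) = ⨆ n : ℕ, (n : ℝ≥0∞) := by
        simp
      rw [this]
      simp [ENNReal.iSup_natCast]
    · obtain ⟨n, hn⟩ := ENNReal.exists_nat_gt ha
      calc a = min a (n : ℝ≥0∞) := (min_eq_left hn.le).symm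
        _ ≤ ⨆ n : ℕ, min a (n : ℝ≥0∞) := le_iSup (fun n : ℕ => min a (n : ℝ≥0∞)) n

theorem saturation_saturated_and_char {X : Type*} (D : ApproachSpace X) (t : X → ℝ≥0∞) :
    IsSaturated D (saturation D t) ∧ (IsSaturated D t ↔ t = saturation D t) := by
  have hsat : IsSaturated D (saturation D t) := by
    intro x y
    apply iSup₂_le
    intro l hl
    calc l y ≤ D.dist x {y} + l x := upperRegular_saturated D l hl.1 x y
      _ ≤ D.dist x {y} + saturation D t x := by
          apply add_le_add_right
          exact le_iSup₂_of_le l hl le_rfl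
  refine ⟨hsat, ?_, fun h => h ▸ hsat⟩
  intro ht
  funext x
  apply le_antisymm
  · -- t x ≤ saturation D t x
    rw [← iSup_min_nat (t x)]
    apply iSup_le
    intro n
    set c : ℝ≥0∞ := min (t x) (n : ℝ≥0∞) with hc
    have hcne : c ≠ ⊤ := ne_top_of_le_ne_top (ENNReal.natCast_ne_top n) (min_le_right _ _)
    set l : X → ℝ≥0∞ := fun z => c - D.dist z {x} with hl
    have hle : ∀ y, l y ≤ t y := by
      intro y
      calc l y = c - D.dist y {x} := rfl
        _ ≤ t x - D.dist y {x} := tsub_le_tsub_right (min_le_left _ _) _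
        _ ≤ t y := tsub_le_iff_left.mpr (ht y x)
    have hlx : c ≤ l x := by
      simp [hl, D.dist_self]
    calc c ≤ l x := hlx
      _ ≤ saturation D t x := le_iSup₂_of_le l ⟨cone_upperRegular D x c hcne, hle⟩ le_rfl
  · exact iSup₂_le fun l hl => hl.2 x
end
end

section
/- Let (X,δ) be an approach space and θ : X → [0,∞]. Then: (i) for every upper regular function λ of (X,δ), ρ_X(θ, λ) = ρ_X(↑θ, λ); and (ii) ↑θ = sup{λ ⊖ ρ_X(θ,λ) : λ ∈ 𝔘X} (pointwise supremum of the pointwise truncated differences). -/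
open scoped ENNReal
open Set Classical

noncomputable section

lemma const_lowerReg {X : Type*} (D : ApproachSpace X) (c : ℝ≥0∞) :
    IsLowerRegular D (fun _ => c) := by
  intro x A
  rcases eq_or_ne A ∅ with rfl | hA
  · simp [deltaP, D.dist_empty]
  · have hAne : A.Nonempty := Set.nonempty_iff_ne_empty.mpr hA
    have himg : (fun _ : X => c) '' A = {c} := hAne.image_const c
    simp [deltaP, himg]

lemma min_const_lowerReg {X : Type*} (D : ApproachSpace X) (c : ℝ≥0∞) (h : X → ℝ≥0∞)
    (hh : IsLowerRegular D h) : IsLowerRegular D (fun x => min c (h x)) := by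
  intro x A
  rcases eq_or_ne A ∅ with rfl | hA
  · simp [deltaP, D.dist_empty]
  have himg : (fun x => min c (h x)) '' A ≠ ∅ := by simpa [Set.image_eq_empty]
  have hAimg : h '' A ≠ ∅ := by simpa [Set.image_eq_empty]
  simp only [deltaP, himg, if_neg himg]
  set M := sSup ((fun x => min c (h x)) '' A) with hM
  rcases le_or_gt c M with hcM | hMc
  · have h1 : min c (h x) ≤ M := le_trans (min_le_left _ _) hcM
    simp [tsub_eq_zero_of_le h1]
  · have hsub : sSup (h '' A) ≤ M := by
      apply sSup_le
      rintro y ⟨a, ha, rfl⟩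
      have h1 : min c (h a) ≤ M := le_sSup ⟨a, ha, rfl⟩
      rcases le_total c (h a) with hc | hc
      · exact absurd (lt_of_le_of_lt ((min_eq_left hc) ▸ h1) hMc) (lt_irrefl c)
      · rwa [min_eq_right hc] at h1
    have h2 := hh x A
    simp only [deltaP, hAimg, if_false, if_neg hAimg] at h2
    calc min c (h x) - M ≤ h x - sSup (h '' A) := tsub_le_tsub (min_le_right _ _) hsub
      _ ≤ D.dist x A := h2

lemma sub_sub_eq_min (s r b : ℝ≥0∞) (hb : b ≠ ⊤) :
    s - (b - r) = min s ((s + r) - b) := by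
  rcases le_total b r with h | h
  · rw [tsub_eq_zero_of_le h, tsub_zero, min_eq_left]
    exact ENNReal.le_sub_of_add_le_right hb (add_le_add_right h s)
  · have hr : r ≠ ⊤ := fun hrt => hb (top_le_iff.mp (hrt ▸ h))
    have h1 : (s + r) - b ≤ s := tsub_le_iff_right.mpr (add_le_add_right h s)
    rw [min_eq_right h1]
    calc s - (b - r) = (s + r) - r - (b - r) := by
          rw [ENNReal.add_sub_cancel_right hr]
      _ = (s + r) - (r + (b - r)) := by rw [tsub_add_eq_tsub_tsub]
      _ = (s + r) - b := by rw [add_tsub_cancel_of_le h]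

lemma upper_sub {X : Type*} (D : ApproachSpace X) (l : X → ℝ≥0∞)
    (hl : IsUpperRegular D l) (r : ℝ≥0∞) : IsUpperRegular D (fun x => l x - r) := by
  rcases hl with h | ⟨hb, hlr⟩
  · subst h
    rcases eq_or_ne r ⊤ with rfl | hr
    · right
      refine ⟨by simp, fun s => ?_⟩
      have heq : (fun x : X => s - ((⊤ : ℝ≥0∞) - ⊤)) = fun _ : X => s := by
        funext x; simp
      rw [heq]
      exact const_lowerReg D s
    · left
      funext x
      simp [ENNReal.top_sub hr]
  · rcases eq_or_ne r ⊤ with rfl | hr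
    · right
      refine ⟨?_, fun s => ?_⟩
      · simp only [ENNReal.sub_top]
        exact lt_of_le_of_lt (iSup_le fun _ => le_rfl) ENNReal.zero_lt_top
      have heq : (fun x : X => s - (l x - ⊤)) = fun _ : X => s := by
        funext x; simp [ENNReal.sub_top]
      rw [heq]
      exact const_lowerReg D s
    · right
      constructor
      · exact lt_of_le_of_lt (iSup_mono fun x => tsub_le_self) hb
      · intro s
        have hfin : ∀ x, l x ≠ ⊤ := fun x => (lt_of_le_of_lt (le_iSup l x) hb).ne
        have heq : (fun x => s - (l x - r)) = fun x => min s ((s + r) - l x) := by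
          funext x
          exact sub_sub_eq_min s r (l x) (hfin x)
        rw [heq]
        exact min_const_lowerReg D s _ (hlr (s + r))

theorem rho_saturation_and_formula {X : Type*} (D : ApproachSpace X) (t : X → ℝ≥0∞) :
    (∀ l : X → ℝ≥0∞, IsUpperRegular D l → rho t l = rho (saturation D t) l) ∧
    (saturation D t = fun x => ⨆ (l : X → ℝ≥0∞) (_ : IsUpperRegular D l), (l x - rho t l)) := by
  have hsat_le : ∀ x, saturation D t x ≤ t x := by
    intro x
    apply iSup₂_le
    rintro l ⟨hl, hle⟩
    exact hle x
  have hle_of_rho : ∀ (l : X → ℝ≥0∞) (x : X), l x - rho t l ≤ t x := by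
    intro l x
    have h1 : l x - t x ≤ rho t l := le_iSup (fun y => l y - t y) x
    rw [tsub_le_iff_right] at h1 ⊢
    rwa [add_comm]
  have part1 : ∀ l : X → ℝ≥0∞, IsUpperRegular D l →
      rho t l = rho (saturation D t) l := by
    intro l hl
    apply le_antisymm
    · exact iSup_mono fun x => tsub_le_tsub_left (hsat_le x) (l x)
    · have hles : ∀ x, l x - rho t l ≤ saturation D t x := fun x =>
        le_iSup₂_of_le (fun y => l y - rho t l)
          ⟨upper_sub D l hl (rho t l), hle_of_rho l⟩ le_rfl
      apply iSup_le
      intro x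
      calc l x - saturation D t x ≤ l x - (l x - rho t l) :=
            tsub_le_tsub_left (hles x) (l x)
        _ ≤ rho t l := tsub_le_iff_right.mpr (le_add_tsub)
  refine ⟨part1, ?_⟩
  funext x
  apply le_antisymm
  · apply iSup₂_le
    rintro l ⟨hl, hle⟩
    have hr0 : rho t l = 0 :=
      ENNReal.iSup_eq_zero.mpr fun y => tsub_eq_zero_of_le (hle y)
    calc l x = l x - rho t l := by rw [hr0, tsub_zero]
      _ ≤ ⨆ (l : X → ℝ≥0∞) (_ : IsUpperRegular D l), (l x - rho t l) :=
          le_iSup₂_of_le l hl le_rfl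
  · apply iSup₂_le
    intro l hl
    exact le_iSup₂_of_le (fun y => l y - rho t l)
      ⟨upper_sub D l hl (rho t l), hle_of_rho l⟩ le_rfl
end
end

section
/- Let (X,δ) be an approach space. Then the index of compactness of the constant function 0_X satisfies χ(0_X) = sup_J inf_{x∈X} sup_{φ∈J} φ(x), where J ranges over all ideals of the complete lattice 𝔏X all of whose members are inhabited lower regular functions. -/
open scoped ENNReal
open Set Classical

noncomputable section

/-- An ideal of the complete lattice `𝔏X` of lower regular functions: a nonempty,
up-directed, downward closed (within `𝔏X`) family of lower regular functions. -/
def IsIdealLR {X : Type*} (D : ApproachSpace X) (J : Set (X → ℝ≥0∞)) : Prop :=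
  J.Nonempty ∧ (∀ f ∈ J, IsLowerRegular D f) ∧
  (∀ f ∈ J, ∀ g ∈ J, ∃ h ∈ J, (∀ x, f x ≤ h x) ∧ (∀ x, g x ≤ h x)) ∧
  (∀ g : X → ℝ≥0∞, IsLowerRegular D g → ∀ f ∈ J, (∀ x, g x ≤ f x) → g ∈ J)

/-- The index of compactness of `θ`. -/
def chiIndex {X : Type*} (D : ApproachSpace X) (t : X → ℝ≥0∞) : ℝ≥0∞ :=
  ⨆ (J : Set (X → ℝ≥0∞)) (_ : IsIdealLR D J),
    (pitchfork (fun x => ⨆ f ∈ J, f x) t - ⨆ f ∈ J, pitchfork f t)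


section Aux

variable {X : Type*} (D : ApproachSpace X)

lemma deltaP_le_dist {f : X → ℝ≥0∞} (hf : IsLowerRegular D f) {x : X} {A : Set X}
    (hA : A.Nonempty) : f x - (⨆ a ∈ A, f a) ≤ D.dist x A := by
  have h := hf x A
  rwa [deltaP, if_neg (by simpa using (hA.image f).ne_empty), sSup_image] at h

lemma isLR_of {f : X → ℝ≥0∞}
    (h : ∀ x A, A.Nonempty → f x - (⨆ a ∈ A, f a) ≤ D.dist x A) : IsLowerRegular D f := by
  intro x A
  rcases A.eq_empty_or_nonempty with rfl | hA
  · simp [deltaP, D.dist_empty]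
  · rw [deltaP, if_neg (by simpa using (hA.image f).ne_empty), sSup_image]
    exact h x A hA

lemma LR_zero : IsLowerRegular D (fun _ => 0) :=
  isLR_of D (by intro x A hA; simp)

lemma LR_sub {f : X → ℝ≥0∞} (hf : IsLowerRegular D f) (c : ℝ≥0∞) :
    IsLowerRegular D (fun x => f x - c) := by
  apply isLR_of
  intro x A hA
  have h1 : (⨆ a ∈ A, (f a - c)) = (⨆ a ∈ A, f a) - c := by
    rw [ENNReal.iSup_sub]
    exact iSup_congr fun a => (ENNReal.iSup_sub).symm
  calc (f x - c) - (⨆ a ∈ A, (f a - c)) = (f x - c) - ((⨆ a ∈ A, f a) - c) := by rw [h1]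
    _ ≤ f x - (⨆ a ∈ A, f a) := tsub_le_iff_right.2 tsub_le_tsub_add_tsub
    _ ≤ D.dist x A := deltaP_le_dist D hf hA

lemma LR_max {f g : X → ℝ≥0∞} (hf : IsLowerRegular D f) (hg : IsLowerRegular D g) :
    IsLowerRegular D (fun x => max (f x) (g x)) := by
  apply isLR_of
  intro x A hA
  rw [tsub_le_iff_right, max_le_iff]
  constructor
  · calc f x ≤ D.dist x A + ⨆ a ∈ A, f a := tsub_le_iff_right.1 (deltaP_le_dist D hf hA)
      _ ≤ D.dist x A + ⨆ a ∈ A, max (f a) (g a) :=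
        add_le_add le_rfl (iSup₂_mono fun a _ => le_max_left _ _)
  · calc g x ≤ D.dist x A + ⨆ a ∈ A, g a := tsub_le_iff_right.1 (deltaP_le_dist D hg hA)
      _ ≤ D.dist x A + ⨆ a ∈ A, max (f a) (g a) :=
        add_le_add le_rfl (iSup₂_mono fun a _ => le_max_right _ _)

end Aux

theorem chi_zero_eq {X : Type*} (D : ApproachSpace X) :
    chiIndex D (fun _ => 0) =
      ⨆ (J : Set (X → ℝ≥0∞)) (_ : IsIdealLR D J ∧ ∀ f ∈ J, (⨅ x, f x) = 0),
        ⨅ x : X, ⨆ f ∈ J, f x := by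
  have pf0 : ∀ (g : X → ℝ≥0∞), pitchfork g (fun _ => 0) = ⨅ x, g x := by
    intro g; simp [pitchfork]
  apply le_antisymm
  · rw [chiIndex]
    apply iSup₂_le
    intro J hJ
    simp only [pf0]
    set c := ⨆ f ∈ J, ⨅ x, f x with hc
    by_cases hctop : c = ⊤
    · rw [hctop]; simp
    obtain ⟨f0, hf0⟩ := hJ.1
    have hcle : ∀ f ∈ J, (⨅ x, f x) ≤ c := fun f hf =>
      le_iSup₂ (f := fun (f : X → ℝ≥0∞) (_ : f ∈ J) => ⨅ x, f x) f hf
    set J' : Set (X → ℝ≥0∞) := {g | IsLowerRegular D g ∧ ∃ f ∈ J, ∀ x, g x ≤ f x - c}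
      with hJ'
    have hsubmem : ∀ f ∈ J, (fun x => f x - c) ∈ J' := fun f hf =>
      ⟨LR_sub D (hJ.2.1 f hf) c, f, hf, fun _ => le_rfl⟩
    have hJ'ideal : IsIdealLR D J' := by
      refine ⟨⟨fun _ => 0, LR_zero D, f0, hf0, fun x => zero_le⟩,
        fun g hg => hg.1, ?_, ?_⟩
      · rintro g₁ ⟨hg₁, f₁, hf₁, hb₁⟩ g₂ ⟨hg₂, f₂, hf₂, hb₂⟩
        obtain ⟨h, hh, hh₁, hh₂⟩ := hJ.2.2.1 f₁ hf₁ f₂ hf₂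
        refine ⟨fun x => max (g₁ x) (g₂ x), ⟨LR_max D hg₁ hg₂, h, hh, fun x => ?_⟩,
          fun x => le_max_left _ _, fun x => le_max_right _ _⟩
        exact max_le ((hb₁ x).trans (tsub_le_tsub_right (hh₁ x) c))
          ((hb₂ x).trans (tsub_le_tsub_right (hh₂ x) c))
      · rintro g hgLR f' ⟨_, f, hf, hb⟩ hle
        exact ⟨hgLR, f, hf, fun x => (hle x).trans (hb x)⟩
    have hJ'inh : ∀ g ∈ J', (⨅ x, g x) = 0 := by
      rintro g ⟨hg, f, hf, hb⟩
      refine le_antisymm ?_ (zero_le)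
      refine (iInf_mono hb).trans ?_
      refine ENNReal.le_of_forall_pos_le_add fun ε hε _ => ?_
      have hlt : (⨅ x, f x) < c + ε :=
        lt_of_le_of_lt (hcle f hf) (ENNReal.lt_add_right hctop (by exact_mod_cast hε.ne'))
      obtain ⟨x, hx⟩ := iInf_lt_iff.1 hlt
      refine (iInf_le _ x).trans ?_
      rw [zero_add]
      exact tsub_le_iff_right.2 (by rw [add_comm] at hx; exact hx.le)
    refine le_trans ?_ (le_iSup₂ (f := fun (J : Set (X → ℝ≥0∞))
      (_ : IsIdealLR D J ∧ ∀ f ∈ J, (⨅ x, f x) = 0) => ⨅ x : X, ⨆ f ∈ J, f x)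
      J' ⟨hJ'ideal, hJ'inh⟩)
    refine le_iInf fun x => ?_
    calc (⨅ x, ⨆ f ∈ J, f x) - c ≤ (⨆ f ∈ J, f x) - c := tsub_le_tsub_right (iInf_le _ x) _
      _ = ⨆ f ∈ J, (f x - c) := by
          rw [ENNReal.iSup_sub]; exact iSup_congr fun f => ENNReal.iSup_sub
      _ ≤ ⨆ g ∈ J', g x := iSup₂_le fun f hf =>
          le_iSup₂_of_le (fun x => f x - c) (hsubmem f hf) le_rfl
  · apply iSup₂_le
    rintro J ⟨hJ, hinh⟩
    rw [chiIndex]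
    refine le_trans ?_ (le_iSup₂ (f := fun (J : Set (X → ℝ≥0∞)) (_ : IsIdealLR D J) =>
      pitchfork (fun x => ⨆ f ∈ J, f x) (fun _ => 0) - ⨆ f ∈ J, pitchfork f (fun _ => 0))
      J hJ)
    simp only [pf0]
    have h0 : (⨆ f ∈ J, ⨅ x, f x) = 0 :=
      le_antisymm (iSup₂_le fun f hf => (hinh f hf).le) (zero_le)
    rw [h0, tsub_zero]
end
end

section
/- An approach space (X,δ) is sober if and only if for every non-vacuous irreducible lower regular function φ of (X,δ) there exist a unique x ∈ X and a unique s ∈ [0,∞) such that φ = s + δ(−,{x}). -/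
open scoped ENNReal
open Set Classical

noncomputable section

/-- An irreducible lower regular function. -/
def IsIrreducibleLR {X : Type*} (D : ApproachSpace X) (f : X → ℝ≥0∞) : Prop :=
  ∀ f1 f2 : X → ℝ≥0∞, IsLowerRegular D f1 → IsLowerRegular D f2 →
    (∀ x, min (f1 x) (f2 x) ≤ f x) → ((∀ x, f1 x ≤ f x) ∨ (∀ x, f2 x ≤ f x))

/-- A sober approach space: every inhabited irreducible lower regular function is
`δ(−,{x})` for a unique point `x`. -/
def SoberAS {X : Type*} (D : ApproachSpace X) : Prop :=
  ∀ f : X → ℝ≥0∞, IsLowerRegular D f → (⨅ x, f x) = 0 → IsIrreducibleLR D f →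
    ∃! x : X, f = fun y => D.dist y {x}

lemma lr_add {X : Type*} (D : ApproachSpace X) {f : X → ℝ≥0∞}
    (hf : IsLowerRegular D f) (s : ℝ≥0∞) : IsLowerRegular D (fun x => f x + s) := by
  intro x A
  rcases eq_or_ne A ∅ with rfl | hA
  · simp [deltaP, D.dist_empty]
  · have hAne : A.Nonempty := nonempty_iff_ne_empty.mpr hA
    have hf' := hf x A
    rw [deltaP, if_neg (by simp [hA])]
    rw [deltaP, if_neg (by simp [hA])] at hf'
    have key : sSup (f '' A) + s ≤ sSup ((fun x => f x + s) '' A) := by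
      haveI := (hAne.image f).to_subtype
      rw [sSup_eq_iSup', ENNReal.iSup_add]
      apply iSup_le
      rintro ⟨b, a, ha, rfl⟩
      exact le_sSup ⟨a, ha, rfl⟩
    calc (fun x => f x + s) x - sSup ((fun x => f x + s) '' A)
        ≤ f x + s - (sSup (f '' A) + s) := tsub_le_tsub_left key _
      _ ≤ f x - sSup (f '' A) := by
          rw [tsub_le_iff_right]
          calc f x + s ≤ (f x - sSup (f '' A) + sSup (f '' A)) + s :=
                add_le_add_left le_tsub_add s
            _ = (f x - sSup (f '' A)) + (sSup (f '' A) + s) := by ring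
      _ ≤ D.dist x A := hf' 

lemma lr_sub {X : Type*} (D : ApproachSpace X) {f : X → ℝ≥0∞}
    (hf : IsLowerRegular D f) (s : ℝ≥0∞) : IsLowerRegular D (fun x => f x - s) := by
  intro x A
  rcases eq_or_ne A ∅ with rfl | hA
  · simp [deltaP, D.dist_empty]
  · have hf' := hf x A
    rw [deltaP, if_neg (by simp [hA])]
    rw [deltaP, if_neg (by simp [hA])] at hf'
    have key : sSup (f '' A) - s ≤ sSup ((fun x => f x - s) '' A) := by
      rw [tsub_le_iff_right]
      apply sSup_le
      rintro b ⟨a, ha, rfl⟩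
      calc f a ≤ (f a - s) + s := le_tsub_add
        _ ≤ sSup ((fun x => f x - s) '' A) + s :=
          add_le_add_left (le_sSup (Set.mem_image_of_mem _ ha)) s
    calc (fun x => f x - s) x - sSup ((fun x => f x - s) '' A)
        ≤ (f x - s) - (sSup (f '' A) - s) := tsub_le_tsub_left key _
      _ ≤ f x - sSup (f '' A) := by
          rw [tsub_tsub]
          refine tsub_le_tsub_left ?_ (f x)
          calc sSup (f '' A) ≤ (sSup (f '' A) - s) + s := le_tsub_add
            _ = s + (sSup (f '' A) - s) := add_comm _ _
      _ ≤ D.dist x A := hf' 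

theorem sober_iff_nonvacuous_irreducible {X : Type*} (D : ApproachSpace X) :
    SoberAS D ↔
      ∀ f : X → ℝ≥0∞, IsLowerRegular D f → f ≠ (fun _ => ⊤) → IsIrreducibleLR D f →
        ∃! p : X × ℝ≥0∞, p.2 ≠ ⊤ ∧ f = fun y => p.2 + D.dist y {p.1} := by
  constructor
  · intro hsob f hlr hnv hirr
    obtain ⟨x0, hx0⟩ : ∃ x, f x ≠ ⊤ := by
      by_contra h
      push_neg at h
      exact hnv (funext fun x => h x)
    set s := ⨅ x, f x with hs_def
    have hsne : s ≠ ⊤ := fun h => hx0 (top_le_iff.mp (h ▸ iInf_le f x0))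
    have hsle : ∀ x, s ≤ f x := fun x => iInf_le f x
    set g : X → ℝ≥0∞ := fun x => f x - s with hg
    have hglr := lr_sub D hlr s
    have hginf : (⨅ x, g x) = 0 := by
      by_contra hc
      have hlt : s < s + ⨅ x, g x := ENNReal.lt_add_right hsne hc
      have hle : s + (⨅ x, g x) ≤ s := by
        conv_rhs => rw [hs_def]
        refine le_iInf fun x => ?_
        calc s + ⨅ x, g x ≤ s + g x := add_le_add_right (iInf_le _ x) s
          _ = g x + s := add_comm _ _
          _ = f x := tsub_add_cancel_of_le (hsle x)
      exact absurd (lt_of_lt_of_le hlt hle) (lt_irrefl s)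
    have hgirr : IsIrreducibleLR D g := by
      intro f1 f2 h1 h2 hmin
      have := hirr (fun x => f1 x + s) (fun x => f2 x + s) (lr_add D h1 s) (lr_add D h2 s)
        (fun x => by
          rw [min_add_add_right]
          calc min (f1 x) (f2 x) + s ≤ g x + s := add_le_add_left (hmin x) s
            _ = f x := tsub_add_cancel_of_le (hsle x))
      rcases this with h | h
      · exact Or.inl fun x => ENNReal.le_sub_of_add_le_right hsne (h x)
      · exact Or.inr fun x => ENNReal.le_sub_of_add_le_right hsne (h x)
    obtain ⟨x, hx, hxu⟩ := hsob g hglr hginf hgirr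
    refine ⟨(x, s), ⟨hsne, ?_⟩, ?_⟩
    · funext y
      have hgy : g y = D.dist y {x} := congrFun hx y
      show f y = s + D.dist y {x}
      rw [← hgy, add_comm]
      exact (tsub_add_cancel_of_le (hsle y)).symm
    · rintro ⟨x', s'⟩ ⟨hs', hf'⟩
      have hss' : s = s' := by
        apply le_antisymm
        · calc s ≤ f x' := hsle x'
            _ = s' + D.dist x' {x'} := congrFun hf' x'
            _ = s' := by rw [D.dist_self, add_zero]
        · rw [hs_def]
          exact le_iInf fun y => by rw [congrFun hf' y]; exact le_self_add
      have hg' : g = fun y => D.dist y {x'} := by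
        funext y
        show f y - s = D.dist y {x'}
        rw [congrFun hf' y, hss', ENNReal.add_sub_cancel_left hs']
      have hx'x : x' = x := hxu x' hg'
      simp [hx'x, hss']
  · intro h f hlr hinf hirr
    have hnv : f ≠ fun _ => ⊤ := by
      intro hc
      rw [hc] at hinf
      simp at hinf
    obtain ⟨⟨x, s⟩, ⟨hsne, hf⟩, hu⟩ := h f hlr hnv hirr
    have hs0 : s = 0 := by
      have h1 : s ≤ ⨅ y, f y :=
        le_iInf fun y => by rw [congrFun hf y]; exact le_self_add
      rw [hinf] at h1
      exact le_zero_iff.mp h1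
    refine ⟨x, ?_, ?_⟩
    · funext y
      rw [congrFun hf y, hs0, zero_add]
    · intro x' hx'
      have heq : ((x', 0) : X × ℝ≥0∞) = (x, s) := by
        apply hu
        refine ⟨by simp, ?_⟩
        funext y
        show f y = 0 + D.dist y {x'}
        rw [zero_add]
        exact congrFun hx' y
      exact congrArg Prod.fst heq
end
end
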